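/- arXiv:1903.08507 — 2 statements merged into one kernel-verified Lean document; each statement's English description precedes it below -/
import Mathlib

section
/- (Bernstein inequality for martingales with unbounded increments.) Let (Y_i)_{1≤i≤n} be real random variables adapted to a filtration (F_i) with E[Y_i | F_{i-1}] = 0 a.s. for each i. Then for all t ≥ 0 and v, m > 0, P( |Σ_{i=1}^n Y_i| ≥ t, max_{i≤n} |Y_i| ≤ m, Σ_{i=1}^n E[Y_i² | F_{i-1}] ≤ v ) ≤ 2 exp( − t² / (2(v + t m / 3)) ). -/
/-!
Fix `l ≥ 0` with `l m < 3` and put `c = (2 (1 - l m / 3))⁻¹`. The elementary inequality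
`(1 - y / 3) (eʸ - 1 - y) ≤ y² / 2` gives `exp (l x) ≤ 1 + l x + c l² x²` whenever `x ≤ m`.
Hence, writing `S_k = ∑_{i ≤ k} Y_i` and `V_k = ∑_{i ≤ k} E[Y_i² | ℱ_{i-1}]` (which is
`ℱ_{k-1}`-measurable), the weight `exp (l S_k - c l² V_k)`, set to zero as soon as some `Y_i`
exceeds `m`, has nonincreasing expectation: conditioning on `ℱ_k` kills the linear term and
turns `Y_{k+1}²` into the increment of `V`, and `1 + u ≤ eᵘ` absorbs it. Markov's inequality
bounds the one-sided event by `exp (-(l t - c l² v))`, which for `l = t / (v + t m / 3)` is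
`exp (-t² / (2 (v + t m / 3)))`; the same bound for `-Y` gives the factor `2`.
-/

open MeasureTheory Real Finset

lemma one_sub_div_three_mul_exp_sub_le (y : ℝ) : (1 - y / 3) * (exp y - 1 - y) ≤ y ^ 2 / 2 := by
  let g : ℝ → ℝ := fun y => (1 - y / 3) * (exp y - 1 - y) - y ^ 2 / 2
  let g' : ℝ → ℝ := fun y => (1 - y / 3) * (exp y - 1) - (exp y - 1 - y) / 3 - y
  have hg : ∀ x, HasDerivAt g (g' x) x := fun x => by
    refine ((((hasDerivAt_id' x).div_const 3).const_sub 1).fun_mul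
      (((hasDerivAt_exp x).sub_const 1).fun_sub (hasDerivAt_id' x)) |>.fun_sub
      ((hasDerivAt_pow 2 x).div_const 2)).congr_deriv ?_
    simp only [g']
    ring
  have hg' : ∀ x, HasDerivAt g' (((1 - x) * exp x - 1) / 3) x := fun x => by
    refine ((((hasDerivAt_id' x).div_const 3).const_sub 1).fun_mul
      ((hasDerivAt_exp x).sub_const 1)).fun_sub
      ((((hasDerivAt_exp x).sub_const 1).fun_sub (hasDerivAt_id' x)).div_const 3) |>.fun_sub
      (hasDerivAt_id' x) |>.congr_deriv ?_
    ring
  have hg'' : ∀ x, (1 - x) * exp x - 1 ≤ 0 := fun x => by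
    have := mul_le_mul_of_nonneg_right (add_one_le_exp (-x)) (exp_pos x).le
    rw [← exp_add, neg_add_cancel, exp_zero] at this
    linarith
  have hconc : ConcaveOn ℝ Set.univ g :=
    concaveOn_of_hasDerivWithinAt2_nonpos convex_univ
      (fun x _ => (hg x).continuousAt.continuousWithinAt)
      (fun x _ => (hg x).hasDerivWithinAt) (fun x _ => (hg' x).hasDerivWithinAt)
      (fun x _ => div_nonpos_of_nonpos_of_nonneg (hg'' x) (by norm_num))
  have hmax : IsMinOn (-g) Set.univ 0 := by
    refine hconc.neg.isMinOn_of_rightDeriv_eq_zero (by simp) ?_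
    rw [((hg 0).neg.hasDerivWithinAt).derivWithin (uniqueDiffWithinAt_Ioi 0)]
    simp [g']
  simpa [g] using hmax (Set.mem_univ y)

lemma exp_mul_le_of_le {l x m : ℝ} (hl : 0 ≤ l) (hx : x ≤ m) (hlm : l * m < 3) :
    exp (l * x) ≤ 1 + l * x + (2 * (1 - l * m / 3))⁻¹ * l ^ 2 * x ^ 2 := by
  have hpos : 0 < 1 - l * m / 3 := by linarith
  have hle : 1 - l * m / 3 ≤ 1 - l * x / 3 := by nlinarith
  have hexp : 0 ≤ exp (l * x) - 1 - l * x := by linarith [add_one_le_exp (l * x)]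
  have key : (1 - l * m / 3) * (exp (l * x) - 1 - l * x) ≤ (l * x) ^ 2 / 2 :=
    (mul_le_mul_of_nonneg_right hle hexp).trans (one_sub_div_three_mul_exp_sub_le _)
  have : exp (l * x) - 1 - l * x ≤ (2 * (1 - l * m / 3))⁻¹ * l ^ 2 * x ^ 2 := by
    rw [mul_assoc, inv_mul_eq_div, le_div_iff₀ (by positivity)]
    nlinarith
  linarith

lemma integral_mul_quadratic_of_condExp_eq_zero {Ω : Type*} {m m0 : MeasurableSpace Ω}
    {μ : Measure Ω} [IsFiniteMeasure μ] (hm : m ≤ m0) {f X : Ω → ℝ} {C : ℝ}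
    (hf : StronglyMeasurable[m] f) (hfC : ∀ᵐ ω ∂μ, ‖f ω‖ ≤ C)
    (hX : Integrable X μ) (hX2 : Integrable (fun ω => X ω ^ 2) μ) (hX0 : μ[X | m] =ᵐ[μ] 0)
    (a b : ℝ) :
    ∫ ω, f ω * (1 + a * X ω + b * X ω ^ 2) ∂μ =
      ∫ ω, f ω * (1 + b * μ[fun ω => X ω ^ 2 | m] ω) ∂μ := by
  let g : Ω → ℝ := (fun _ => 1) + a • X + b • fun ω => X ω ^ 2
  have hg : Integrable g μ := ((integrable_const 1).add (hX.smul a)).add (hX2.smul b)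
  have hfg : Integrable (f * g) μ := hg.bdd_mul (hf.mono hm).aestronglyMeasurable hfC
  have hcond : μ[g | m] =ᵐ[μ] fun ω => 1 + b * μ[fun ω => X ω ^ 2 | m] ω := by
    filter_upwards [condExp_add ((integrable_const 1).add (hX.smul a)) (hX2.smul b) m,
      condExp_add (integrable_const 1) (hX.smul a) m, condExp_smul a X m,
      condExp_smul b (fun ω => X ω ^ 2) m, hX0] with ω h1 h2 h3 h4 h5
    simp [g, h1, h2, h3, h4, h5, condExp_const hm]
  calc ∫ ω, f ω * (1 + a * X ω + b * X ω ^ 2) ∂μ = ∫ ω, μ[f * g | m] ω ∂μ :=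
        (integral_condExp hm).symm
    _ = ∫ ω, f ω * (1 + b * μ[fun ω => X ω ^ 2 | m] ω) ∂μ := by
        refine integral_congr_ae ?_
        filter_upwards [condExp_mul_of_stronglyMeasurable_left hf hfg hg, hcond] with ω h1 h2
        rw [h1, Pi.mul_apply, h2]

section ExpWeight

variable {Ω : Type*} {m0 : MeasurableSpace Ω} {μ : Measure Ω} {ℱ : Filtration ℕ m0}
  {Y : ℕ → Ω → ℝ} {V W : Ω → ℝ} {n k : ℕ} {m l c : ℝ}

noncomputable def condSqSum (μ : Measure Ω) (ℱ : Filtration ℕ m0) (Y : ℕ → Ω → ℝ) (k : ℕ) :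
    Ω → ℝ :=
  fun ω => ∑ i ∈ Icc 1 k, μ[fun ω' => Y i ω' ^ 2 | ℱ (i - 1)] ω

lemma condSqSum_succ (k : ℕ) :
    condSqSum μ ℱ Y (k + 1) = condSqSum μ ℱ Y k + μ[fun ω => Y (k + 1) ω ^ 2 | ℱ k] := by
  ext ω
  exact sum_Icc_succ_top (by omega) _

lemma condSqSum_neg : condSqSum μ ℱ (-Y) = condSqSum μ ℱ Y := by
  ext ω
  simp only [condSqSum, Pi.neg_apply, neg_sq]

lemma stronglyMeasurable_condSqSum {j : ℕ} (hk : k ≤ j + 1) :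
    StronglyMeasurable[ℱ j] (condSqSum μ ℱ Y k) :=
  stronglyMeasurable_fun_sum _ fun i hi =>
    stronglyMeasurable_condExp.mono (ℱ.mono (by simp only [mem_Icc] at hi; omega))

lemma condSqSum_nonneg : 0 ≤ᵐ[μ] condSqSum μ ℱ Y k := by
  have h := (Filter.eventually_all_finset (Icc 1 k)).2 fun i _ =>
    condExp_nonneg (m := ℱ (i - 1)) (f := fun ω => Y i ω ^ 2)
      (ae_of_all μ fun ω => sq_nonneg (Y i ω))
  filter_upwards [h] with ω hω using sum_nonneg hω

noncomputable def expWeight (Y : ℕ → Ω → ℝ) (m l c : ℝ) (k : ℕ) (V : Ω → ℝ) : Ω → ℝ :=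
  {ω | ∀ i ∈ Icc 1 k, Y i ω ≤ m}.indicator
    fun ω => exp (l * ∑ i ∈ Icc 1 k, Y i ω - c * l ^ 2 * V ω)

lemma expWeight_of_forall_le {ω : Ω} (h : ∀ i ∈ Icc 1 k, Y i ω ≤ m) :
    expWeight Y m l c k V ω = exp (l * ∑ i ∈ Icc 1 k, Y i ω - c * l ^ 2 * V ω) := by
  rw [expWeight, Set.indicator_apply]
  exact if_pos h

lemma expWeight_of_not_forall_le {ω : Ω} (h : ¬∀ i ∈ Icc 1 k, Y i ω ≤ m) :
    expWeight Y m l c k V ω = 0 := by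
  rw [expWeight, Set.indicator_apply]
  exact if_neg h

lemma expWeight_nonneg (ω : Ω) : 0 ≤ expWeight Y m l c k V ω :=
  Set.indicator_nonneg (fun _ _ => (exp_pos _).le) ω

lemma expWeight_le_exp (hl : 0 ≤ l) (hc : 0 ≤ c) {ω : Ω} (hV : 0 ≤ V ω) :
    expWeight Y m l c k V ω ≤ exp (l * (k * m)) := by
  by_cases hω : ∀ i ∈ Icc 1 k, Y i ω ≤ m
  · rw [expWeight_of_forall_le hω]
    have hS : ∑ i ∈ Icc 1 k, Y i ω ≤ k * m := by simpa using sum_le_sum hω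
    refine exp_le_exp.2 ?_
    nlinarith [mul_le_mul_of_nonneg_left hS hl, mul_nonneg (mul_nonneg hc (sq_nonneg l)) hV]
  · rw [expWeight_of_not_forall_le hω]
    positivity

lemma stronglyMeasurable_expWeight (hadap : ∀ i ∈ Icc 1 n, StronglyMeasurable[ℱ i] (Y i))
    (hk : k ≤ n) (hV : StronglyMeasurable[ℱ k] V) :
    StronglyMeasurable[ℱ k] (expWeight Y m l c k V) := by
  have hY : ∀ i ∈ Icc 1 k, StronglyMeasurable[ℱ k] (Y i) := fun i hi => by
    rw [mem_Icc] at hi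
    exact (hadap i (mem_Icc.2 ⟨hi.1, hi.2.trans hk⟩)).mono (ℱ.mono hi.2)
  refine StronglyMeasurable.indicator ?_ ?_
  · exact continuous_exp.comp_stronglyMeasurable
      (((stronglyMeasurable_fun_sum _ hY).const_mul l).sub (hV.const_mul _))
  · simp only [Set.ofPred_forall]
    exact MeasurableSet.biInter (Set.to_countable _) fun i hi =>
      measurableSet_le (hY i hi).measurable measurable_const

lemma norm_expWeight_le (hl : 0 ≤ l) (hc : 0 ≤ c) (hV : 0 ≤ᵐ[μ] V) :
    ∀ᵐ ω ∂μ, ‖expWeight Y m l c k V ω‖ ≤ exp (l * (k * m)) := by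
  filter_upwards [hV] with ω hω
  rw [norm_of_nonneg (expWeight_nonneg ω)]
  exact expWeight_le_exp hl hc hω

lemma integrable_expWeight [IsFiniteMeasure μ]
    (hadap : ∀ i ∈ Icc 1 n, StronglyMeasurable[ℱ i] (Y i)) (hk : k ≤ n) (hl : 0 ≤ l)
    (hc : 0 ≤ c) (hV : StronglyMeasurable[ℱ k] V) (hV0 : 0 ≤ᵐ[μ] V) :
    Integrable (expWeight Y m l c k V) μ :=
  (integrable_const _).mono'
    ((stronglyMeasurable_expWeight hadap hk hV).mono (ℱ.le k)).aestronglyMeasurable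
    (norm_expWeight_le hl hc hV0)

lemma expWeight_succ_le (hc : 1 / 2 ≤ c)
    (hexp : ∀ x ≤ m, exp (l * x) ≤ 1 + l * x + c * l ^ 2 * x ^ 2) (ω : Ω) :
    expWeight Y m l c (k + 1) V ω ≤
      expWeight Y m l c k V ω * (1 + l * Y (k + 1) ω + c * l ^ 2 * Y (k + 1) ω ^ 2) := by
  by_cases h : ∀ i ∈ Icc 1 (k + 1), Y i ω ≤ m
  · have hk : ∀ i ∈ Icc 1 k, Y i ω ≤ m := fun i hi => h i (Icc_subset_Icc_right k.le_succ hi)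
    rw [expWeight_of_forall_le h, expWeight_of_forall_le hk, sum_Icc_succ_top (by omega)]
    calc exp (l * (∑ i ∈ Icc 1 k, Y i ω + Y (k + 1) ω) - c * l ^ 2 * V ω)
        = exp (l * ∑ i ∈ Icc 1 k, Y i ω - c * l ^ 2 * V ω) * exp (l * Y (k + 1) ω) := by
          rw [← exp_add]; ring_nf
      _ ≤ _ := mul_le_mul_of_nonneg_left (hexp _ (h _ (by simp))) (exp_pos _).le
  · rw [expWeight_of_not_forall_le h]
    refine mul_nonneg (expWeight_nonneg ω) ?_
    nlinarith [sq_nonneg (1 + l * Y (k + 1) ω), sq_nonneg (l * Y (k + 1) ω)]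

lemma expWeight_add_mul_le (ω : Ω) :
    expWeight Y m l c k (V + W) ω * (1 + c * l ^ 2 * W ω) ≤ expWeight Y m l c k V ω := by
  by_cases h : ∀ i ∈ Icc 1 k, Y i ω ≤ m
  · rw [expWeight_of_forall_le h, expWeight_of_forall_le h]
    calc _ ≤ exp (l * ∑ i ∈ Icc 1 k, Y i ω - c * l ^ 2 * (V + W) ω) * exp (c * l ^ 2 * W ω) :=
          mul_le_mul_of_nonneg_left (by linarith [add_one_le_exp (c * l ^ 2 * W ω)])
            (exp_pos _).le
      _ = _ := by rw [← exp_add, Pi.add_apply]; ring_nf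
  · simp [expWeight_of_not_forall_le h]

variable (hadap : ∀ i ∈ Icc 1 n, StronglyMeasurable[ℱ i] (Y i))
  (hint : ∀ i ∈ Icc 1 n, Integrable (Y i) μ)
  (hint2 : ∀ i ∈ Icc 1 n, Integrable (fun ω => Y i ω ^ 2) μ)
  (hmart : ∀ i ∈ Icc 1 n, μ[Y i | ℱ (i - 1)] =ᵐ[μ] 0)
include hadap hint hint2 hmart

lemma integral_expWeight_succ_le [IsFiniteMeasure μ] (hl : 0 ≤ l) (hc : 1 / 2 ≤ c)
    (hexp : ∀ x ≤ m, exp (l * x) ≤ 1 + l * x + c * l ^ 2 * x ^ 2) (hk : k + 1 ≤ n) :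
    ∫ ω, expWeight Y m l c (k + 1) (condSqSum μ ℱ Y (k + 1)) ω ∂μ ≤
      ∫ ω, expWeight Y m l c k (condSqSum μ ℱ Y k) ω ∂μ := by
  have hk1 : k + 1 ∈ Icc 1 n := mem_Icc.2 ⟨by omega, hk⟩
  have hc0 : 0 ≤ c := by linarith
  let f := expWeight Y m l c k (condSqSum μ ℱ Y (k + 1))
  have hf : StronglyMeasurable[ℱ k] f :=
    stronglyMeasurable_expWeight hadap (by omega) (stronglyMeasurable_condSqSum le_rfl)
  have hfC : ∀ᵐ ω ∂μ, ‖f ω‖ ≤ exp (l * (k * m)) := norm_expWeight_le hl hc0 condSqSum_nonneg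
  have hq : Integrable (fun ω => 1 + l * Y (k + 1) ω + c * l ^ 2 * Y (k + 1) ω ^ 2) μ :=
    ((integrable_const 1).add ((hint _ hk1).const_mul l)).add ((hint2 _ hk1).const_mul _)
  have hW : Integrable (fun ω => 1 + c * l ^ 2 * μ[fun ω => Y (k + 1) ω ^ 2 | ℱ k] ω) μ :=
    (integrable_const 1).add (integrable_condExp.const_mul _)
  calc ∫ ω, expWeight Y m l c (k + 1) (condSqSum μ ℱ Y (k + 1)) ω ∂μ
      ≤ ∫ ω, f ω * (1 + l * Y (k + 1) ω + c * l ^ 2 * Y (k + 1) ω ^ 2) ∂μ :=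
        integral_mono (integrable_expWeight hadap hk hl hc0 (stronglyMeasurable_condSqSum
          (by omega)) condSqSum_nonneg) (hq.bdd_mul (hf.mono (ℱ.le k)).aestronglyMeasurable hfC)
          (expWeight_succ_le hc hexp)
    _ = ∫ ω, f ω * (1 + c * l ^ 2 * μ[fun ω => Y (k + 1) ω ^ 2 | ℱ k] ω) ∂μ :=
        integral_mul_quadratic_of_condExp_eq_zero (ℱ.le k) hf hfC (hint _ hk1) (hint2 _ hk1)
          (hmart _ hk1) l _
    _ ≤ ∫ ω, expWeight Y m l c k (condSqSum μ ℱ Y k) ω ∂μ := by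
        refine integral_mono (hW.bdd_mul (hf.mono (ℱ.le k)).aestronglyMeasurable hfC)
          (integrable_expWeight hadap (by omega) hl hc0 (stronglyMeasurable_condSqSum
            (by omega)) condSqSum_nonneg) fun ω => ?_
        simpa only [f, condSqSum_succ] using expWeight_add_mul_le ω

lemma integral_expWeight_le_one [IsProbabilityMeasure μ] (hl : 0 ≤ l) (hc : 1 / 2 ≤ c)
    (hexp : ∀ x ≤ m, exp (l * x) ≤ 1 + l * x + c * l ^ 2 * x ^ 2) (hk : k ≤ n) :
    ∫ ω, expWeight Y m l c k (condSqSum μ ℱ Y k) ω ∂μ ≤ 1 := by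
  induction k with
  | zero => simp [expWeight, condSqSum]
  | succ k ih =>
    exact (integral_expWeight_succ_le hadap hint hint2 hmart hl hc hexp hk).trans
      (ih (by omega))

lemma measure_sum_ge_le_exp [IsProbabilityMeasure μ] {t v : ℝ} (hl : 0 ≤ l) (hc : 1 / 2 ≤ c)
    (hexp : ∀ x ≤ m, exp (l * x) ≤ 1 + l * x + c * l ^ 2 * x ^ 2) :
    μ {ω | t ≤ ∑ i ∈ Icc 1 n, Y i ω ∧ (∀ i ∈ Icc 1 n, Y i ω ≤ m) ∧ condSqSum μ ℱ Y n ω ≤ v} ≤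
      ENNReal.ofReal (exp (-(l * t - c * l ^ 2 * v))) := by
  set a := exp (l * t - c * l ^ 2 * v)
  set G := expWeight Y m l c n (condSqSum μ ℱ Y n)
  have hsub : {ω | t ≤ ∑ i ∈ Icc 1 n, Y i ω ∧ (∀ i ∈ Icc 1 n, Y i ω ≤ m) ∧
      condSqSum μ ℱ Y n ω ≤ v} ⊆ {ω | a ≤ G ω} := by
    rintro ω ⟨hS, hY, hV⟩
    rw [Set.mem_ofPred_eq, show G ω = _ from expWeight_of_forall_le hY]
    refine exp_le_exp.2 ?_
    nlinarith [mul_le_mul_of_nonneg_left hS hl, mul_le_mul_of_nonneg_left hV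
      (mul_nonneg (by linarith : (0 : ℝ) ≤ c) (sq_nonneg l))]
  have hmarkov : a * μ.real {ω | a ≤ G ω} ≤ ∫ ω, G ω ∂μ :=
    mul_meas_ge_le_integral_of_nonneg (ae_of_all μ expWeight_nonneg)
      (integrable_expWeight hadap le_rfl hl (by linarith)
        (stronglyMeasurable_condSqSum n.le_succ) condSqSum_nonneg) a
  calc μ _ ≤ μ {ω | a ≤ G ω} := measure_mono hsub
    _ = ENNReal.ofReal (μ.real {ω | a ≤ G ω}) :=
        (ENNReal.ofReal_toReal (measure_ne_top _ _)).symm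
    _ ≤ ENNReal.ofReal (exp (-(l * t - c * l ^ 2 * v))) := by
        refine ENNReal.ofReal_le_ofReal ?_
        rw [exp_neg, ← one_div, le_div_iff₀' (exp_pos _)]
        exact hmarkov.trans (integral_expWeight_le_one hadap hint hint2 hmart hl hc hexp le_rfl)

lemma measure_sum_ge_le_bernstein [IsProbabilityMeasure μ] {t v : ℝ} (ht : 0 ≤ t) (hv : 0 < v)
    (hm : 0 ≤ m) :
    μ {ω | t ≤ ∑ i ∈ Icc 1 n, Y i ω ∧ (∀ i ∈ Icc 1 n, Y i ω ≤ m) ∧ condSqSum μ ℱ Y n ω ≤ v} ≤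
      ENNReal.ofReal (exp (-t ^ 2 / (2 * (v + t * m / 3)))) := by
  set d := v + t * m / 3
  have hd : 0 < d := by positivity
  have hvd : v / d ≤ 1 := (div_le_one hd).2 (le_add_of_nonneg_right (by positivity))
  have hlm : 1 - t / d * m / 3 = v / d := by field_simp; ring
  have hc : 1 / 2 ≤ (2 * (1 - t / d * m / 3))⁻¹ := by
    rw [hlm, one_div]
    exact inv_anti₀ (by positivity) (by linarith)
  convert measure_sum_ge_le_exp hadap hint hint2 hmart (div_nonneg ht hd.le) hc
    (fun x hx => exp_mul_le_of_le (div_nonneg ht hd.le) hx (by linarith [div_pos hv hd])) using 3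
  rw [hlm]
  field_simp
  ring

end ExpWeight

/-- Bernstein inequality for martingale differences with unbounded increments:
if `E[Y_i | ℱ_{i-1}] = 0`, then
`P(|∑ Y_i| ≥ t, max|Y_i| ≤ m, ∑ E[Y_i²|ℱ_{i-1}] ≤ v) ≤ 2 exp(−t²/(2(v + tm/3)))`. -/
theorem stmt_5 {Ω : Type*} {m0 : MeasurableSpace Ω} (μ : Measure Ω)
    [IsProbabilityMeasure μ] (ℱ : Filtration ℕ m0) (n : ℕ) (Y : ℕ → Ω → ℝ)
    (hadap : ∀ i ∈ Finset.Icc 1 n, StronglyMeasurable[ℱ i] (Y i))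
    (hint : ∀ i ∈ Finset.Icc 1 n, Integrable (Y i) μ)
    (hint2 : ∀ i ∈ Finset.Icc 1 n, Integrable (fun ω => (Y i ω) ^ 2) μ)
    (hmart : ∀ i ∈ Finset.Icc 1 n,
      MeasureTheory.condExp (ℱ (i - 1)) μ (Y i) =ᵐ[μ] fun _ => (0 : ℝ))
    (t v m : ℝ) (ht : 0 ≤ t) (hv : 0 < v) (hm : 0 < m) :
    μ {ω | t ≤ |∑ i ∈ Finset.Icc 1 n, Y i ω| ∧
        (∀ i ∈ Finset.Icc 1 n, |Y i ω| ≤ m) ∧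
        (∑ i ∈ Finset.Icc 1 n,
          MeasureTheory.condExp (ℱ (i - 1)) μ (fun ω' => (Y i ω') ^ 2) ω) ≤ v} ≤
      ENNReal.ofReal (2 * Real.exp (-t ^ 2 / (2 * (v + t * m / 3)))) := by
  have hpos := measure_sum_ge_le_bernstein hadap hint hint2 hmart ht hv hm.le
  have hneg := measure_sum_ge_le_bernstein (Y := -Y) (fun i hi => (hadap i hi).neg)
    (fun i hi => (hint i hi).neg) (by simpa using hint2)
    (fun i hi => (condExp_neg (Y i) _).trans (by
      filter_upwards [hmart i hi] with ω hω
      simp [hω])) ht hv hm.le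
  rw [condSqSum_neg] at hneg
  refine ((measure_mono ?_).trans ((measure_union_le _ _).trans (add_le_add hpos hneg))).trans_eq
    (by rw [← ENNReal.ofReal_add (exp_pos _).le (exp_pos _).le, ← two_mul])
  rintro ω ⟨hS, hY, hV⟩
  rcases le_abs'.1 hS with h | h
  · exact Or.inr ⟨by simpa using le_neg_of_le_neg h,
      fun i hi => by simpa using neg_le.1 (abs_le.1 (hY i hi)).1, hV⟩
  · exact Or.inl ⟨h, fun i hi => (abs_le.1 (hY i hi)).2, hV⟩
end

section
/- (Freedman's Bennett inequality for supermartingale increments.) Let (X_i)_{1≤i≤n} be real random variables adapted to (F_i) with X_i ≤ 1 a.s. and E[X_i | F_{i-1}] ≤ 0 a.s. Then for all a ≥ 0 and b > 0, P( Σ_{i=1}^n X_i ≥ a, Σ_{i=1}^n E[X_i² | F_{i-1}] ≤ b ) ≤ exp(−b h(a/b)), where h(u) = (1+u)log(1+u) − u. -/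
open MeasureTheory ProbabilityTheory Real

/-!
For `l ≥ 0` and `x ≤ 1` we have `exp (l x) ≤ 1 + l x + φ x²` with `φ = eˡ - l - 1`: compare the
exponential series termwise when `0 ≤ x ≤ 1`, and use `eᵗ ≤ 1 + t + t²/2` for `t ≤ 0`.
Conditioning on `ℱ_{i-1}` and using `E[X_i | ℱ_{i-1}] ≤ 0` gives
`E[exp (l X_i) | ℱ_{i-1}] ≤ exp (φ E[X_i² | ℱ_{i-1}])`, so `M_k = exp (l S_k - φ V_k)`, with
`S_k` the partial sums and `V_k` the sums of conditional second moments, is a supermartingale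
starting at `1`, hence `E[M_n] ≤ 1`. On the event `S_n ≥ a, V_n ≤ b` we have
`M_n ≥ exp (l a - φ b)`, and Markov's inequality with `l = log (1 + a/b)` gives the bound.
-/

lemma exp_le_one_add_add_sq_div_two_of_nonpos {t : ℝ} (ht : t ≤ 0) :
    exp t ≤ 1 + t + t ^ 2 / 2 := by
  have hderiv (x : ℝ) :
      HasDerivAt (fun t : ℝ => 1 + t + t ^ 2 / 2 - exp t) (1 + x - exp x) x := by
    have h : HasDerivAt (fun t : ℝ => 1 + t + t ^ 2 / 2 - exp t)
        (0 + 1 + 2 * x ^ 1 / 2 - exp x) x :=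
      (((hasDerivAt_const x 1).add (hasDerivAt_id x)).add
        ((hasDerivAt_pow 2 x).div_const 2)).sub (hasDerivAt_exp x)
    convert h using 1
    ring
  have hanti : Antitone (fun t : ℝ => 1 + t + t ^ 2 / 2 - exp t) :=
    antitone_of_deriv_nonpos (fun x => (hderiv x).differentiableAt) fun x => by
      rw [(hderiv x).deriv]
      linarith [add_one_le_exp x]
  have hcmp := hanti ht
  norm_num at hcmp
  linarith

lemma exp_sub_self_sub_one_nonneg (l : ℝ) : 0 ≤ exp l - l - 1 := by
  linarith [add_one_le_exp l]

lemma exp_sub_one_sub_self_eq_tsum (y : ℝ) :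
    exp y - 1 - y = ∑' k : ℕ, y ^ (k + 2) / (k + 2).factorial := by
  rw [exp_eq_exp_ℝ, NormedSpace.exp_eq_tsum_div]
  beta_reduce
  rw [← (summable_pow_div_factorial y).sum_add_tsum_nat_add 2]
  simp only [Finset.sum_range_succ, Finset.range_one, Finset.sum_singleton, pow_zero,
    Nat.factorial_zero, Nat.cast_one, div_one, pow_one, Nat.factorial_one]
  ring

lemma exp_mul_sub_one_sub_le_sq_mul {l x : ℝ} (hl : 0 ≤ l) (hx₀ : 0 ≤ x) (hx₁ : x ≤ 1) :
    exp (l * x) - 1 - l * x ≤ x ^ 2 * (exp l - 1 - l) := by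
  rw [exp_sub_one_sub_self_eq_tsum, exp_sub_one_sub_self_eq_tsum, ← tsum_mul_left]
  refine Summable.tsum_le_tsum (fun k => ?_)
    ((summable_nat_add_iff 2).2 (summable_pow_div_factorial _))
    (((summable_nat_add_iff 2).2 (summable_pow_div_factorial l)).mul_left _)
  rw [mul_pow, mul_div_assoc', mul_comm (l ^ (k + 2))]
  gcongr ?_ * _ / _
  exact pow_le_pow_of_le_one hx₀ hx₁ (by omega)

lemma exp_mul_le_of_le_one {l x : ℝ} (hl : 0 ≤ l) (hx : x ≤ 1) :
    exp (l * x) ≤ 1 + l * x + (exp l - l - 1) * x ^ 2 := by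
  rcases le_or_gt 0 x with hx₀ | hx₀
  · linarith [exp_mul_sub_one_sub_le_sq_mul hl hx₀ hx]
  · have h₁ := exp_le_one_add_add_sq_div_two_of_nonpos (mul_nonpos_of_nonneg_of_nonpos hl hx₀.le)
    have h₂ := quadratic_le_exp_of_nonneg hl
    nlinarith [sq_nonneg x]

section Conditional

variable {Ω : Type*} {m m0 : MeasurableSpace Ω} {μ : Measure Ω} [IsFiniteMeasure μ]
  {Y : Ω → ℝ} {l : ℝ}

lemma condExp_exp_mul_le (hm : m ≤ m0) (hY : Integrable Y μ)
    (hY2 : Integrable (fun ω => Y ω ^ 2) μ) (hY1 : ∀ᵐ ω ∂μ, Y ω ≤ 1) (hYm : μ[Y | m] ≤ᵐ[μ] 0)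
    (hl : 0 ≤ l) :
    μ[fun ω => exp (l * Y ω) | m] ≤ᵐ[μ]
      fun ω => exp ((exp l - l - 1) * μ[fun ω => Y ω ^ 2 | m] ω) := by
  set φ := exp l - l - 1
  have hexp : Integrable (fun ω => exp (l * Y ω)) μ :=
    integrable_exp_mul_of_le l 1 hl hY.aemeasurable hY1
  have hP : Integrable (fun ω => 1 + l * Y ω + φ * Y ω ^ 2) μ :=
    ((integrable_const 1).add (hY.const_mul l)).add (hY2.const_mul φ)
  have hlin : μ[fun ω => 1 + l * Y ω + φ * Y ω ^ 2 | m] =ᵐ[μ]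
      fun ω => 1 + l * μ[Y | m] ω + φ * μ[fun ω => Y ω ^ 2 | m] ω := by
    have h₁ : μ[fun ω => 1 + l * Y ω + φ * Y ω ^ 2 | m] =ᵐ[μ]
        μ[fun ω => 1 + l * Y ω | m] + μ[fun ω => φ * Y ω ^ 2 | m] :=
      condExp_add ((integrable_const 1).add (hY.const_mul l)) (hY2.const_mul φ) m
    have h₂ : μ[fun ω => 1 + l * Y ω | m] =ᵐ[μ] μ[fun _ => 1 | m] + μ[fun ω => l * Y ω | m] :=
      condExp_add (integrable_const 1) (hY.const_mul l) m
    have h₃ : μ[fun ω => l * Y ω | m] =ᵐ[μ] l • μ[Y | m] := condExp_smul l Y m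
    have h₄ : μ[fun ω => φ * Y ω ^ 2 | m] =ᵐ[μ] φ • μ[fun ω => Y ω ^ 2 | m] :=
      condExp_smul φ _ m
    filter_upwards [h₁, h₂, h₃, h₄] with ω h₁ h₂ h₃ h₄
    simp only [h₁, Pi.add_apply, h₂, h₃, h₄, condExp_const hm, Pi.smul_apply, smul_eq_mul]
  filter_upwards [condExp_mono (m := m) hexp hP
      (hY1.mono fun ω hω => exp_mul_le_of_le_one hl hω), hlin, hYm] with ω hmono hlin hYm
  rw [hlin] at hmono
  have hexp_ge := add_one_le_exp (φ * μ[fun ω => Y ω ^ 2 | m] ω)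
  have hdrift : l * μ[Y | m] ω ≤ 0 := mul_nonpos_of_nonneg_of_nonpos hl hYm
  linarith

lemma integrable_exp_mul_sub_mul_condExp_sq (hm : m ≤ m0) (hY : AEMeasurable Y μ)
    (hY1 : ∀ᵐ ω ∂μ, Y ω ≤ 1) (hl : 0 ≤ l) {φ : ℝ} (hφ : 0 ≤ φ) :
    Integrable (fun ω => exp (l * Y ω - φ * μ[fun ω => Y ω ^ 2 | m] ω)) μ := by
  have hc : 0 ≤ᵐ[μ] μ[fun ω => Y ω ^ 2 | m] := condExp_nonneg (.of_forall fun ω => sq_nonneg _)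
  have hZ : AEMeasurable (fun ω => l * Y ω - φ * μ[fun ω => Y ω ^ 2 | m] ω) μ :=
    (hY.const_mul l).sub ((stronglyMeasurable_condExp.mono hm).measurable.aemeasurable.const_mul φ)
  simpa only [one_mul] using integrable_exp_mul_of_le 1 l zero_le_one hZ
    (by filter_upwards [hY1, hc] with ω hY1 hc; nlinarith [mul_nonneg hφ hc])

lemma condExp_exp_mul_sub_le_one (hm : m ≤ m0) (hY : Integrable Y μ)
    (hY2 : Integrable (fun ω => Y ω ^ 2) μ) (hY1 : ∀ᵐ ω ∂μ, Y ω ≤ 1) (hYm : μ[Y | m] ≤ᵐ[μ] 0)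
    (hl : 0 ≤ l) :
    μ[fun ω => exp (l * Y ω - (exp l - l - 1) * μ[fun ω => Y ω ^ 2 | m] ω) | m] ≤ᵐ[μ] 1 := by
  set φ := exp l - l - 1
  set c := μ[fun ω => Y ω ^ 2 | m]
  have hφ : 0 ≤ φ := exp_sub_self_sub_one_nonneg l
  have hc : 0 ≤ᵐ[μ] c := condExp_nonneg (.of_forall fun ω => sq_nonneg (Y ω))
  have hsplit : (fun ω => exp (l * Y ω - φ * c ω)) =
      (fun ω => exp (-(φ * c ω))) * fun ω => exp (l * Y ω) := by
    ext ω
    rw [Pi.mul_apply, ← exp_add, neg_add_eq_sub]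
  have hfactor : StronglyMeasurable[m] fun ω => exp (-(φ * c ω)) :=
    continuous_exp.comp_stronglyMeasurable (stronglyMeasurable_condExp.const_mul φ).neg
  have hpull := condExp_stronglyMeasurable_mul_of_bound hm hfactor
    (integrable_exp_mul_of_le l 1 hl hY.aemeasurable hY1) 1
    (hc.mono fun ω hω => by
      rw [norm_of_nonneg (exp_pos _).le, exp_le_one_iff, neg_nonpos]
      exact mul_nonneg hφ hω)
  rw [hsplit]
  filter_upwards [hpull, condExp_exp_mul_le hm hY hY2 hY1 hYm hl] with ω hpull hle
  calc _ = exp (-(φ * c ω)) * μ[fun ω => exp (l * Y ω) | m] ω := hpull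
    _ ≤ exp (-(φ * c ω)) * exp (φ * c ω) := by gcongr
    _ = 1 := by rw [← exp_add, neg_add_cancel, exp_zero]

lemma integral_mul_le_integral_of_condExp_le_one (hm : m ≤ m0) {G D : Ω → ℝ}
    (hG : StronglyMeasurable[m] G) (hG0 : 0 ≤ᵐ[μ] G) {C : ℝ} (hGC : ∀ᵐ ω ∂μ, ‖G ω‖ ≤ C)
    (hD : Integrable D μ) (hDm : μ[D | m] ≤ᵐ[μ] 1) :
    ∫ ω, G ω * D ω ∂μ ≤ ∫ ω, G ω ∂μ := by
  have hpull := condExp_stronglyMeasurable_mul_of_bound hm hG hD C hGC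
  calc ∫ ω, G ω * D ω ∂μ = ∫ ω, μ[G * D | m] ω ∂μ := (integral_condExp hm).symm
    _ = ∫ ω, G ω * μ[D | m] ω ∂μ := integral_congr_ae hpull
    _ ≤ ∫ ω, G ω ∂μ := by
      refine integral_mono_ae (integrable_condExp.congr hpull)
        (.of_bound (hG.mono hm).aestronglyMeasurable C hGC) ?_
      filter_upwards [hG0, hDm] with ω hG0 hDm
      exact mul_le_of_le_one_right hG0 hDm

end Conditional

lemma measure_le_exp_neg_of_integral_exp_le_one {Ω : Type*} {m0 : MeasurableSpace Ω}
    {μ : Measure Ω} [IsFiniteMeasure μ] {Z : Ω → ℝ} (hZ : Integrable (fun ω => exp (Z ω)) μ)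
    (h : ∫ ω, exp (Z ω) ∂μ ≤ 1) (ε : ℝ) :
    μ {ω | ε ≤ Z ω} ≤ ENNReal.ofReal (exp (-ε)) := by
  rw [ENNReal.le_ofReal_iff_toReal_le (measure_ne_top _ _) (exp_pos _).le, ← measureReal_def]
  have hchernoff := measure_ge_le_exp_mul_mgf ε zero_le_one (by simpa only [one_mul] using hZ)
  simp only [mgf, one_mul, neg_one_mul] at hchernoff
  exact hchernoff.trans (mul_le_of_le_one_right (exp_pos _).le h)

section Freedman

variable {Ω : Type*} {m0 : MeasurableSpace Ω} (μ : Measure Ω) (ℱ : Filtration ℕ m0)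
  (X : ℕ → Ω → ℝ) (l : ℝ)

noncomputable def expSupermartingale (k : ℕ) (ω : Ω) : ℝ :=
  exp (l * ∑ i ∈ Finset.Icc 1 k, X i ω -
    (exp l - l - 1) * ∑ i ∈ Finset.Icc 1 k, μ[fun ω' => X i ω' ^ 2 | ℱ (i - 1)] ω)

lemma expSupermartingale_zero : expSupermartingale μ ℱ X l 0 = 1 := by
  ext
  simp [expSupermartingale]

lemma expSupermartingale_succ (k : ℕ) (ω : Ω) :
    expSupermartingale μ ℱ X l (k + 1) ω = expSupermartingale μ ℱ X l k ω *
      exp (l * X (k + 1) ω - (exp l - l - 1) * μ[fun ω' => X (k + 1) ω' ^ 2 | ℱ k] ω) := by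
  simp only [expSupermartingale, Finset.sum_Icc_succ_top (Nat.le_add_left 1 k), ← exp_add,
    Nat.add_sub_cancel]
  ring_nf

variable {μ ℱ X l}

lemma stronglyMeasurable_expSupermartingale {k : ℕ}
    (hadap : ∀ i ∈ Finset.Icc 1 k, StronglyMeasurable[ℱ i] (X i)) :
    StronglyMeasurable[ℱ k] (expSupermartingale μ ℱ X l k) := by
  refine continuous_exp.comp_stronglyMeasurable (.sub (.const_mul ?_ l) (.const_mul ?_ _))
  · exact Finset.stronglyMeasurable_fun_sum _ fun i hi =>
      (hadap i hi).mono (ℱ.mono (Finset.mem_Icc.1 hi).2)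
  · exact Finset.stronglyMeasurable_fun_sum _ fun i hi =>
      stronglyMeasurable_condExp.mono (ℱ.mono (by grind))

lemma norm_expSupermartingale_le {k : ℕ} (hle1 : ∀ i ∈ Finset.Icc 1 k, ∀ᵐ ω ∂μ, X i ω ≤ 1)
    (hl : 0 ≤ l) : ∀ᵐ ω ∂μ, ‖expSupermartingale μ ℱ X l k ω‖ ≤ exp (l * k) := by
  have hX := (Filter.eventually_all_finset _).2 hle1
  have hV : ∀ᵐ ω ∂μ, ∀ i ∈ Finset.Icc 1 k, 0 ≤ μ[fun ω' => X i ω' ^ 2 | ℱ (i - 1)] ω :=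
    (Filter.eventually_all_finset _).2 fun i _ =>
      condExp_nonneg (.of_forall fun ω => sq_nonneg _)
  filter_upwards [hX, hV] with ω hX hV
  rw [expSupermartingale, norm_of_nonneg (exp_pos _).le, exp_le_exp]
  have hS : ∑ i ∈ Finset.Icc 1 k, X i ω ≤ k := (Finset.sum_le_sum hX).trans (by simp)
  nlinarith [mul_le_mul_of_nonneg_left hS hl,
    mul_nonneg (exp_sub_self_sub_one_nonneg l) (Finset.sum_nonneg hV)]

theorem integral_expSupermartingale_le_one [IsProbabilityMeasure μ] (n : ℕ)
    (hadap : ∀ i ∈ Finset.Icc 1 n, StronglyMeasurable[ℱ i] (X i))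
    (hint : ∀ i ∈ Finset.Icc 1 n, Integrable (X i) μ)
    (hint2 : ∀ i ∈ Finset.Icc 1 n, Integrable (fun ω => (X i ω) ^ 2) μ)
    (hle1 : ∀ i ∈ Finset.Icc 1 n, ∀ᵐ ω ∂μ, X i ω ≤ 1)
    (hsupmart : ∀ i ∈ Finset.Icc 1 n, μ[X i | ℱ (i - 1)] ≤ᵐ[μ] 0) (hl : 0 ≤ l) :
    ∫ ω, expSupermartingale μ ℱ X l n ω ∂μ ≤ 1 := by
  induction n with
  | zero => simp [expSupermartingale_zero]
  | succ k ih =>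
    have hsub : Finset.Icc 1 k ⊆ Finset.Icc 1 (k + 1) := Finset.Icc_subset_Icc_right k.le_succ
    have hk : k + 1 ∈ Finset.Icc 1 (k + 1) := Finset.mem_Icc.2 ⟨by omega, le_rfl⟩
    have hD : Integrable (fun ω => exp (l * X (k + 1) ω -
        (exp l - l - 1) * μ[fun ω' => X (k + 1) ω' ^ 2 | ℱ k] ω)) μ :=
      integrable_exp_mul_sub_mul_condExp_sq (ℱ.le k) (hint _ hk).aemeasurable (hle1 _ hk)
        hl (exp_sub_self_sub_one_nonneg l)
    simp_rw [expSupermartingale_succ]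
    refine (integral_mul_le_integral_of_condExp_le_one (ℱ.le k)
      (stronglyMeasurable_expSupermartingale fun i hi => hadap i (hsub hi))
      (.of_forall fun ω => (exp_pos _).le)
      (norm_expSupermartingale_le (fun i hi => hle1 i (hsub hi)) hl) hD
      (condExp_exp_mul_sub_le_one (ℱ.le k) (hint _ hk) (hint2 _ hk) (hle1 _ hk)
        (by simpa using hsupmart _ hk) hl)).trans
      (ih (fun i hi => hadap i (hsub hi)) (fun i hi => hint i (hsub hi))
        (fun i hi => hint2 i (hsub hi)) (fun i hi => hle1 i (hsub hi))
        (fun i hi => hsupmart i (hsub hi)))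

end Freedman

/-- Freedman's Bennett inequality: if `X_i ≤ 1` a.s. and `E[X_i|ℱ_{i-1}] ≤ 0` a.s.,
then `P(∑ X_i ≥ a, ∑ E[X_i²|ℱ_{i-1}] ≤ b) ≤ exp(−b h(a/b))` where
`h(u) = (1+u)log(1+u) − u`. -/
theorem stmt_6 {Ω : Type*} {m0 : MeasurableSpace Ω} (μ : Measure Ω)
    [IsProbabilityMeasure μ] (ℱ : Filtration ℕ m0) (n : ℕ) (X : ℕ → Ω → ℝ)
    (hadap : ∀ i ∈ Finset.Icc 1 n, StronglyMeasurable[ℱ i] (X i))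
    (hint : ∀ i ∈ Finset.Icc 1 n, Integrable (X i) μ)
    (hint2 : ∀ i ∈ Finset.Icc 1 n, Integrable (fun ω => (X i ω) ^ 2) μ)
    (hle1 : ∀ i ∈ Finset.Icc 1 n, ∀ᵐ ω ∂μ, X i ω ≤ 1)
    (hsupmart : ∀ i ∈ Finset.Icc 1 n,
      ∀ᵐ ω ∂μ, MeasureTheory.condExp (ℱ (i - 1)) μ (X i) ω ≤ 0)
    (a b : ℝ) (ha : 0 ≤ a) (hb : 0 < b) :
    μ {ω | a ≤ ∑ i ∈ Finset.Icc 1 n, X i ω ∧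
        (∑ i ∈ Finset.Icc 1 n,
          MeasureTheory.condExp (ℱ (i - 1)) μ (fun ω' => (X i ω') ^ 2) ω) ≤ b} ≤
      ENNReal.ofReal
        (Real.exp (-(b * ((1 + a / b) * Real.log (1 + a / b) - a / b)))) := by
  have hu : 0 < 1 + a / b := by positivity
  set l := log (1 + a / b)
  have hl : 0 ≤ l := log_nonneg (by linarith [div_nonneg ha hb.le])
  have hexponent : l * a - (exp l - l - 1) * b = b * ((1 + a / b) * l - a / b) := by
    rw [exp_log hu]
    field_simp
    ring
  have hM : Integrable (expSupermartingale μ ℱ X l n) μ :=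
    .of_bound ((stronglyMeasurable_expSupermartingale hadap).mono (ℱ.le n)).aestronglyMeasurable
      _ (norm_expSupermartingale_le hle1 hl)
  rw [← hexponent]
  refine le_trans (measure_mono fun ω ⟨hS, hV⟩ => ?_)
    (measure_le_exp_neg_of_integral_exp_le_one hM
      (integral_expSupermartingale_le_one n hadap hint hint2 hle1 hsupmart hl) _)
  exact sub_le_sub (mul_le_mul_of_nonneg_left hS hl)
    (mul_le_mul_of_nonneg_left hV (exp_sub_self_sub_one_nonneg l))
end
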